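/- arXiv:2103.06950 — 3 statements merged into one kernel-verified Lean document; each statement's English description precedes it below -/
import Mathlib

section
/- For any A ≥ 0, σ > 0, and μ ∈ ℝ, the function K(r) = A exp(−2π²σ²r²) cos(2πμr) is a positive semidefinite kernel on ℝ: for all n ∈ ℕ, points x₁,…,xₙ ∈ ℝ and coefficients a₁,…,aₙ ∈ ℝ, we have Σᵢⱼ aᵢaⱼ K(xᵢ − xⱼ) ≥ 0. -/
/-! The Gaussian factors as `exp (-c x²) · exp (2c x y) · exp (-c y²)`, and `exp (2c x y)` is a
convergent series `∑ (2c)ᵏ/k! · xᵏ yᵏ` of rank-one kernels with nonnegative weights, so it is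
positive semidefinite. Since `cos (ω (x - y)) = cos ωx cos ωy + sin ωx sin ωy`, multiplying a
positive semidefinite kernel by this cosine gives the sum of two rescalings of it. -/

open Real

def IsPosSemidefKernel {X : Type*} (K : X → X → ℝ) : Prop :=
  ∀ (n : ℕ) (x : Fin n → X) (a : Fin n → ℝ), 0 ≤ ∑ i, ∑ j, a i * a j * K (x i) (x j)

theorem isPosSemidefKernel_one {X : Type*} : IsPosSemidefKernel fun _ _ : X => (1 : ℝ) := by
  intro n x a
  simpa only [mul_one, ← Finset.sum_mul_sum, ← sq] using sq_nonneg (∑ i, a i)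

namespace IsPosSemidefKernel

variable {X : Type*} {K L : X → X → ℝ}

theorem add (hK : IsPosSemidefKernel K) (hL : IsPosSemidefKernel L) :
    IsPosSemidefKernel (K + L) := by
  intro n x a
  simpa only [Pi.add_apply, mul_add, Finset.sum_add_distrib] using add_nonneg (hK n x a) (hL n x a)

theorem const_mul (hK : IsPosSemidefKernel K) {A : ℝ} (hA : 0 ≤ A) :
    IsPosSemidefKernel fun x y => A * K x y := by
  intro n x a
  simpa only [mul_left_comm _ A, ← Finset.mul_sum] using mul_nonneg hA (hK n x a)

theorem mul_left_mul_right (hK : IsPosSemidefKernel K) (f : X → ℝ) :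
    IsPosSemidefKernel fun x y => f x * K x y * f y := by
  intro n x a
  convert hK n x (fun i => a i * f (x i)) using 3 with i - j -
  ring

theorem of_hasSum {K : ℕ → X → X → ℝ} (hK : ∀ k, IsPosSemidefKernel (K k))
    (hL : ∀ x y, HasSum (fun k => K k x y) (L x y)) : IsPosSemidefKernel L := by
  intro n x a
  exact (hasSum_sum fun i _ => hasSum_sum fun j _ => (hL (x i) (x j)).mul_left (a i * a j)).nonneg
    fun k => hK k n x a

theorem mul_cos {K : ℝ → ℝ → ℝ} (hK : IsPosSemidefKernel K) (ω : ℝ) :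
    IsPosSemidefKernel fun x y => K x y * cos (ω * (x - y)) := by
  have hsplit : (fun x y => K x y * cos (ω * (x - y))) =
      (fun x y => cos (ω * x) * K x y * cos (ω * y)) +
        fun x y => sin (ω * x) * K x y * sin (ω * y) := by
    funext x y
    rw [Pi.add_apply, Pi.add_apply, mul_sub, cos_sub]
    ring
  rw [hsplit]
  exact (hK.mul_left_mul_right _).add (hK.mul_left_mul_right _)

end IsPosSemidefKernel

theorem isPosSemidefKernel_exp_mul_mul {c : ℝ} (hc : 0 ≤ c) :
    IsPosSemidefKernel fun x y : ℝ => exp (c * (x * y)) := by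
  have hweight (k : ℕ) : 0 ≤ c ^ k / k.factorial := by positivity
  refine IsPosSemidefKernel.of_hasSum
    (fun k => (isPosSemidefKernel_one.const_mul (hweight k)).mul_left_mul_right (· ^ k))
    fun x y => ?_
  have hexp : HasSum (fun k : ℕ => (c * (x * y)) ^ k / k.factorial) (exp (c * (x * y))) := by
    rw [exp_eq_exp_ℝ]
    exact NormedSpace.expSeries_div_hasSum_exp _
  convert hexp using 2 with k
  ring

theorem isPosSemidefKernel_exp_neg_mul_sq_sub {c : ℝ} (hc : 0 ≤ c) :
    IsPosSemidefKernel fun x y : ℝ => exp (-(c * (x - y) ^ 2)) := by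
  have hfactor : (fun x y : ℝ => exp (-(c * (x - y) ^ 2))) =
      fun x y => exp (-(c * x ^ 2)) * exp (2 * c * (x * y)) * exp (-(c * y ^ 2)) := by
    funext x y
    rw [← exp_add, ← exp_add]
    congr 1
    ring
  rw [hfactor]
  exact (isPosSemidefKernel_exp_mul_mul (by positivity)).mul_left_mul_right _

theorem gaussian_sm_posdef_general (A σ μ : ℝ) (hA : 0 ≤ A)
    (n : ℕ) (x : Fin n → ℝ) (a : Fin n → ℝ) :
    0 ≤ ∑ i, ∑ j, a i * a j *
        (A * Real.exp (-2 * π^2 * σ^2 * (x i - x j)^2) * Real.cos (2 * π * μ * (x i - x j))) := by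
  have hK := ((isPosSemidefKernel_exp_neg_mul_sq_sub (c := 2 * π ^ 2 * σ ^ 2)
    (by positivity)).mul_cos (2 * π * μ)).const_mul hA
  convert hK n x a using 4 with i - j -
  dsimp only
  ring_nf

/-- The Gaussian spectral-mixture kernel component
`K(r) = A exp(−2π²σ²r²) cos(2πμr)` is a positive semidefinite kernel on `ℝ`. -/
theorem gaussian_sm_posdef (A σ μ : ℝ) (hA : 0 ≤ A) (hσ : 0 < σ)
    (n : ℕ) (x : Fin n → ℝ) (a : Fin n → ℝ) :
    0 ≤ ∑ i, ∑ j, a i * a j *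
        (A * Real.exp (-2 * π^2 * σ^2 * (x i - x j)^2) * Real.cos (2 * π * μ * (x i - x j))) :=
  gaussian_sm_posdef_general A σ μ hA n x a
end

section
/- For any A ≥ 0, w > 0, and μ ∈ ℝ, the kernel K(r) = A cos(2πμr) sinc(rw) with sinc(x) = sin(πx)/(πx) (sinc(0)=1) is positive semidefinite on ℝ: for all n ∈ ℕ, points x₁,…,xₙ ∈ ℝ and real coefficients a₁,…,aₙ, Σᵢⱼ aᵢaⱼ K(xᵢ − xⱼ) ≥ 0. -/
open Real

/-- `sinc x = sin(πx)/(πx)`, with `sinc 0 = 1`. -/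
noncomputable def sinc (x : ℝ) : ℝ := if x = 0 then 1 else Real.sin (π * x) / (π * x)

/-!
The spectral density of the kernel is the normalised indicator of `[μ - w/2, μ + w/2]`
(symmetrised), so `cos (2πμr) · sinc (rw) = w⁻¹ ∫_{μ-w/2}^{μ+w/2} cos (2πξr) dξ`.
For every frequency `ξ` the quadratic form of `r ↦ cos (2πξr)` is
`|∑ aᵢ e^{2πiξxᵢ}|² ≥ 0`, and averaging nonnegative quadratic forms against a finite
measure keeps them nonnegative (the easy direction of Bochner's theorem).
-/

open MeasureTheory

lemma integral_cos_const_mul {c : ℝ} (hc : c ≠ 0) (a b : ℝ) :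
    ∫ ξ in a..b, cos (c * ξ) = (sin (c * b) - sin (c * a)) / c := by
  rw [intervalIntegral.integral_comp_mul_left _ hc, integral_cos, smul_eq_mul, inv_mul_eq_div]

lemma cos_mul_sinc_eq_integral {w : ℝ} (hw : w ≠ 0) (μ r : ℝ) :
    cos (2 * π * μ * r) * _root_.sinc (r * w) =
      w⁻¹ * ∫ ξ in (μ - w / 2)..(μ + w / 2), cos (2 * π * ξ * r) := by
  rcases eq_or_ne r 0 with rfl | hr
  · simp [_root_.sinc, hw]
  have hc : 2 * π * r ≠ 0 := by positivity
  have hrw : r * w ≠ 0 := mul_ne_zero hr hw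
  simp_rw [show ∀ ξ, 2 * π * ξ * r = 2 * π * r * ξ from fun ξ ↦ by ring]
  rw [integral_cos_const_mul hc, sin_sub_sin, _root_.sinc, if_neg hrw,
    show (2 * π * r * (μ + w / 2) - 2 * π * r * (μ - w / 2)) / 2 = π * (r * w) by ring,
    show (2 * π * r * (μ + w / 2) + 2 * π * r * (μ - w / 2)) / 2 = 2 * π * r * μ by ring]
  field_simp

section QuadraticForm

variable {ι : Type*} [Fintype ι] (x a : ι → ℝ)

lemma sum_sum_mul_cos_mul_sub (t : ℝ) :
    ∑ i, ∑ j, a i * a j * cos (t * (x i - x j)) =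
      (∑ i, a i * cos (t * x i)) ^ 2 + (∑ i, a i * sin (t * x i)) ^ 2 := by
  simp_rw [sq, Finset.sum_mul_sum, ← Finset.sum_add_distrib, mul_sub, cos_sub]
  exact Finset.sum_congr rfl fun i _ ↦ Finset.sum_congr rfl fun j _ ↦ by ring

lemma sum_sum_mul_cos_mul_sub_nonneg (t : ℝ) :
    0 ≤ ∑ i, ∑ j, a i * a j * cos (t * (x i - x j)) := by
  rw [sum_sum_mul_cos_mul_sub]
  positivity

lemma sum_sum_mul_integral_cos_nonneg {ν : Measure ℝ} [IsFiniteMeasure ν] :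
    0 ≤ ∑ i, ∑ j, a i * a j * ∫ ξ, cos (2 * π * ξ * (x i - x j)) ∂ν := by
  have hint : ∀ i j, Integrable (fun ξ ↦ a i * a j * cos (2 * π * ξ * (x i - x j))) ν :=
    fun i j ↦ (Integrable.of_bound (by fun_prop) 1
      (ae_of_all _ fun ξ ↦ by simpa using abs_cos_le_one _)).const_mul (a i * a j)
  have hint_sum : ∀ i, Integrable (fun ξ ↦ ∑ j, a i * a j * cos (2 * π * ξ * (x i - x j))) ν :=
    fun i ↦ integrable_finsetSum _ fun j _ ↦ hint i j
  simp_rw [← integral_const_mul]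
  rw [Finset.sum_congr rfl fun i _ ↦ (integral_finsetSum _ fun j _ ↦ hint i j).symm,
    ← integral_finsetSum _ fun i _ ↦ hint_sum i]
  exact integral_nonneg fun ξ ↦ sum_sum_mul_cos_mul_sub_nonneg x a (2 * π * ξ)

end QuadraticForm

/-- The block spectral-mixture (sinc) kernel component
`K(r) = A cos(2πμr) sinc(rw)` is a positive semidefinite kernel on `ℝ`. -/
theorem block_sm_posdef (A w μ : ℝ) (hA : 0 ≤ A) (hw : 0 < w)
    (n : ℕ) (x : Fin n → ℝ) (a : Fin n → ℝ) :
    0 ≤ ∑ i, ∑ j, a i * a j *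
        (A * Real.cos (2 * π * μ * (x i - x j)) * _root_.sinc ((x i - x j) * w)) := by
  have hspectral : ∀ i j, a i * a j *
      (A * cos (2 * π * μ * (x i - x j)) * _root_.sinc ((x i - x j) * w)) =
        A / w * (a i * a j * ∫ ξ in Set.Ioc (μ - w / 2) (μ + w / 2),
          cos (2 * π * ξ * (x i - x j))) := fun i j ↦ by
    rw [mul_assoc A, cos_mul_sinc_eq_integral hw.ne',
      intervalIntegral.integral_of_le (by linarith)]
    ring
  simp_rw [hspectral, ← Finset.mul_sum]
  exact mul_nonneg (div_nonneg hA hw.le) (sum_sum_mul_integral_cos_nonneg x a)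
end

section
/- Let Q ∈ ℕ, and for each q ∈ {1,…,Q} let A^q be an N×N real positive semidefinite matrix, μ^q ∈ ℝ, w^q > 0. Define the matrix-valued function K : ℝ → ℝ^{N×N} by K_{ij}(r) = Σ_q A^q_{ij} cos(2πμ^q r) sinc(r w^q). Then K is a valid multi-output covariance: for all n ∈ ℕ, points x₁,…,xₙ ∈ ℝ, channel indices c₁,…,cₙ ∈ {1,…,N}, and real coefficients a₁,…,aₙ, we have Σ_{k,l} a_k a_l K_{c_k c_l}(x_k − x_l) ≥ 0. -/
open Real

/-!
Each summand `A^q cos(2πμ r) sinc(r w)` is `1/w` times the integral of `A^q cos(2πν r)` over the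
band `ν ∈ [μ - w/2, μ + w/2]`. For fixed `ν`, `cos(2πν(x_k - x_l))` splits as
`cos θ_k cos θ_l + sin θ_k sin θ_l`, so the quadratic form at frequency `ν` is a sum of two
quadratic forms of the positive semidefinite matrix `A^q` and hence nonnegative; integrating over
the band and summing over `q` keeps it nonnegative.
-/

open Finset

theorem Matrix.PosSemidef.sum_mul_mul_submatrix_nonneg {ι κ : Type*} [Fintype κ]
    {M : Matrix ι ι ℝ} (hM : M.PosSemidef) (c : κ → ι) (b : κ → ℝ) :
    0 ≤ ∑ k, ∑ l, b k * b l * M (c k) (c l) := by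
  have := (hM.submatrix c).dotProduct_mulVec_nonneg b
  simp only [dotProduct, Matrix.mulVec, Matrix.submatrix_apply, star_trivial, mul_sum] at this
  exact this.trans_eq (sum_congr rfl fun k _ => sum_congr rfl fun l _ => by ring)

theorem Matrix.PosSemidef.sum_mul_mul_cos_sub_nonneg {ι κ : Type*} [Fintype κ]
    {M : Matrix ι ι ℝ} (hM : M.PosSemidef) (c : κ → ι) (a θ : κ → ℝ) :
    0 ≤ ∑ k, ∑ l, a k * a l * M (c k) (c l) * cos (θ k - θ l) := by
  have hsplit : ∀ k l, a k * a l * M (c k) (c l) * cos (θ k - θ l) =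
      a k * cos (θ k) * (a l * cos (θ l)) * M (c k) (c l) +
        a k * sin (θ k) * (a l * sin (θ l)) * M (c k) (c l) := fun k l => by
    rw [cos_sub]; ring
  simp only [hsplit, sum_add_distrib]
  exact add_nonneg (hM.sum_mul_mul_submatrix_nonneg c _) (hM.sum_mul_mul_submatrix_nonneg c _)

theorem integral_cos_eq_mul_cos_mul_sinc (μ w r : ℝ) :
    ∫ ν in (μ - w / 2)..(μ + w / 2), cos (2 * π * ν * r)
      = w * (cos (2 * π * μ * r) * _root_.sinc (r * w)) := by
  rcases eq_or_ne r 0 with rfl | hr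
  · simp [_root_.sinc]
  rcases eq_or_ne w 0 with rfl | hw
  · simp
  have hc : 2 * π * r ≠ 0 := by positivity
  simp_rw [show ∀ ν, 2 * π * ν * r = 2 * π * r * ν from fun ν => by ring]
  rw [intervalIntegral.integral_comp_mul_left cos hc, integral_cos, _root_.sinc,
    if_neg (mul_ne_zero hr hw),
    show 2 * π * r * (μ + w / 2) = 2 * π * r * μ + π * (r * w) by ring,
    show 2 * π * r * (μ - w / 2) = 2 * π * r * μ - π * (r * w) by ring, sin_add, sin_sub,
    smul_eq_mul]
  field_simp
  ring

theorem Matrix.PosSemidef.sum_mul_mul_cos_mul_sinc_nonneg {ι κ : Type*} [Fintype κ]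
    {M : Matrix ι ι ℝ} (hM : M.PosSemidef) (c : κ → ι) (a x : κ → ℝ) (μ : ℝ) {w : ℝ}
    (hw : 0 < w) :
    0 ≤ ∑ k, ∑ l, a k * a l *
      (M (c k) (c l) * cos (2 * π * μ * (x k - x l)) * _root_.sinc ((x k - x l) * w)) := by
  have hband : ∫ ν in (μ - w / 2)..(μ + w / 2),
      ∑ k, ∑ l, a k * a l * M (c k) (c l) * cos (2 * π * ν * (x k - x l)) =
      w * ∑ k, ∑ l, a k * a l *
        (M (c k) (c l) * cos (2 * π * μ * (x k - x l)) * _root_.sinc ((x k - x l) * w)) := by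
    rw [intervalIntegral.integral_finsetSum fun k _ =>
      Continuous.intervalIntegrable (by fun_prop) _ _, mul_sum]
    refine sum_congr rfl fun k _ => ?_
    rw [intervalIntegral.integral_finsetSum fun l _ =>
      Continuous.intervalIntegrable (by fun_prop) _ _, mul_sum]
    refine sum_congr rfl fun l _ => ?_
    rw [intervalIntegral.integral_const_mul, integral_cos_eq_mul_cos_mul_sinc]
    ring
  have hpos : 0 ≤ ∫ ν in (μ - w / 2)..(μ + w / 2),
      ∑ k, ∑ l, a k * a l * M (c k) (c l) * cos (2 * π * ν * (x k - x l)) := by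
    refine intervalIntegral.integral_nonneg (by linarith) fun ν _ => ?_
    simpa only [mul_sub] using hM.sum_mul_mul_cos_sub_nonneg c a (fun k => 2 * π * ν * x k)
  exact nonneg_of_mul_nonneg_right (hband ▸ hpos) hw

/-- The (one-dimensional input) Minecraft kernel
`K_{ij}(r) = Σ_q A^q_{ij} cos(2πμ^q r) sinc(r w^q)`, with each `A^q` positive semidefinite,
is a valid multi-output covariance function. -/
theorem minecraft_kernel_valid (N Q : ℕ)
    (A : Fin Q → Matrix (Fin N) (Fin N) ℝ) (hA : ∀ q, (A q).PosSemidef)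
    (μ w : Fin Q → ℝ) (hw : ∀ q, 0 < w q)
    (n : ℕ) (x : Fin n → ℝ) (c : Fin n → Fin N) (a : Fin n → ℝ) :
    0 ≤ ∑ k, ∑ l, a k * a l *
        (∑ q, A q (c k) (c l) * Real.cos (2 * π * μ q * (x k - x l)) *
          _root_.sinc ((x k - x l) * w q)) := by
  calc 0 ≤ ∑ q, ∑ k, ∑ l, a k * a l * (A q (c k) (c l) * cos (2 * π * μ q * (x k - x l)) *
          _root_.sinc ((x k - x l) * w q)) :=
        sum_nonneg fun q _ => (hA q).sum_mul_mul_cos_mul_sinc_nonneg c a x (μ q) (hw q)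
    _ = _ := by
      simp_rw [mul_sum]
      rw [sum_comm]
      exact sum_congr rfl fun k _ => sum_comm
end
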